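/- For every positive integer m and every radius r with mr ≤ K, the Hamming-ball volume satisfies log Vol(m·r, K) ≤ m · log Vol(r, K); equivalently, Vol(m·r, K) ≤ Vol(r, K)^m. -/

import Mathlib

/-- Volume of the Hamming ball of radius r in {0,1}^K. -/
def Vol (r K : ℕ) : ℕ := ∑ j ∈ Finset.range (r + 1), K.choose j

/-!
Choosing `i + j` elements of a `K`-set and then `i` of those is the same as choosing `i` elements
and then `j` more, so `C(K, i + j) ≤ C(K, i) · C(K, j)`. Summing this over the shells of a ball
gives `Vol (a + b) ≤ Vol a · Vol b`, and iterating gives `Vol (m r) ≤ (Vol r) ^ m`.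
-/

theorem Nat.choose_add_le_mul_choose (n i j : ℕ) : n.choose (i + j) ≤ n.choose i * n.choose j :=
  calc n.choose (i + j) ≤ n.choose (i + j) * (i + j).choose i :=
        Nat.le_mul_of_pos_right _ (Nat.choose_pos (Nat.le_add_right i j))
    _ = n.choose i * (n - i).choose j := by
        rw [Nat.choose_mul (Nat.le_add_right i j), Nat.add_sub_cancel_left]
    _ ≤ n.choose i * n.choose j :=
        Nat.mul_le_mul_left _ (Nat.choose_le_choose j (Nat.sub_le n i))

theorem vol_zero_left (K : ℕ) : Vol 0 K = 1 := by
  simp [Vol]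

theorem vol_succ_left (r K : ℕ) : Vol (r + 1) K = Vol r K + K.choose (r + 1) :=
  Finset.sum_range_succ _ _

theorem choose_le_vol (r K : ℕ) : K.choose r ≤ Vol r K :=
  Finset.single_le_sum (fun _ _ => Nat.zero_le _) (Finset.self_mem_range_succ r)

theorem vol_add_le_mul (a b K : ℕ) : Vol (a + b) K ≤ Vol a K * Vol b K := by
  induction b with
  | zero => simp [vol_zero_left]
  | succ b ih =>
    have hshell : K.choose (a + (b + 1)) ≤ Vol a K * K.choose (b + 1) :=
      (Nat.choose_add_le_mul_choose K a (b + 1)).trans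
        (Nat.mul_le_mul_right _ (choose_le_vol a K))
    calc Vol (a + (b + 1)) K = Vol (a + b) K + K.choose (a + (b + 1)) := vol_succ_left _ _
      _ ≤ Vol a K * Vol b K + Vol a K * K.choose (b + 1) := Nat.add_le_add ih hshell
      _ = Vol a K * Vol (b + 1) K := by rw [vol_succ_left, Nat.mul_add]

theorem vol_mul_le_pow (m r K : ℕ) : Vol (m * r) K ≤ Vol r K ^ m := by
  induction m with
  | zero => simp [vol_zero_left]
  | succ m ih =>
    calc Vol ((m + 1) * r) K = Vol (m * r + r) K := by rw [Nat.succ_mul]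
      _ ≤ Vol (m * r) K * Vol r K := vol_add_le_mul _ _ _
      _ ≤ Vol r K ^ m * Vol r K := Nat.mul_le_mul_right _ ih
      _ = Vol r K ^ (m + 1) := (pow_succ _ _).symm

theorem vol_pos (r K : ℕ) : 0 < Vol r K :=
  Finset.sum_pos' (fun _ _ => Nat.zero_le _) ⟨0, by simp⟩

theorem vol_scale_submul_general (m r K : ℕ) :
    Vol (m * r) K ≤ Vol r K ^ m ∧
      Real.logb 2 (Vol (m * r) K) ≤ m * Real.logb 2 (Vol r K) := by
  have hvol := vol_mul_le_pow m r K
  refine ⟨hvol, ?_⟩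
  have hpos : (0 : ℝ) < Vol (m * r) K := by exact_mod_cast vol_pos _ _
  rw [← Real.logb_pow]
  exact Real.logb_le_logb_of_le (by norm_num) hpos (by exact_mod_cast hvol)

/-- Submultiplicativity of Hamming ball volumes: for m ≥ 1 and m·r ≤ K,
Vol(m·r, K) ≤ Vol(r, K)^m, equivalently log Vol(m·r, K) ≤ m·log Vol(r, K). -/
theorem vol_scale_submul (m r K : ℕ) (hm : 1 ≤ m) (h : m * r ≤ K) :
    Vol (m * r) K ≤ Vol r K ^ m ∧
      Real.logb 2 (Vol (m * r) K) ≤ m * Real.logb 2 (Vol r K) :=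
  vol_scale_submul_general m r K
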